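/- arXiv:1301.5697 — 6 statements merged into one kernel-verified Lean document; each statement's English description precedes it below -/
import Mathlib

section
/- Let m and n be positive integers divisible by 3. The oriented bipartite graph D*(m,n) with bipartition (M, N), where M = M0 ∪ M1 ∪ M2 with |Mi| = m/3, N = N0 ∪ N1 ∪ N2 with |Ni| = n/3, and arc set consisting of all arcs from Mi to Ni and all arcs from Ni to M(i+1 mod 3) for i = 0,1,2, contains no directed cycle of length 4. -/
open Finset

/-- The digraph given by arc relation `E` contains a directed cycle of length 4. -/
def HasDirC4 {V : Type*} (E : V → V → Prop) : Prop :=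
  ∃ a b c d : V, a ≠ b ∧ a ≠ c ∧ a ≠ d ∧ b ≠ c ∧ b ≠ d ∧ c ≠ d ∧
    E a b ∧ E b c ∧ E c d ∧ E d a

/-- Out-degree of a vertex in the digraph `E`. -/
def OutDeg {V : Type*} [Fintype V] (E : V → V → Prop) [DecidableRel E] (u : V) : ℕ :=
  (Finset.univ.filter fun w => E u w).card

/-- In-degree of a vertex in the digraph `E`. -/
def InDeg {V : Type*} [Fintype V] (E : V → V → Prop) [DecidableRel E] (u : V) : ℕ :=
  (Finset.univ.filter fun w => E w u).card

/-- `E` is the extremal digraph `D*(|A|,|B|)` on the bipartition `(A,B)`: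
the parts split into three equal blocks `M i`, `N i` with all arcs from
`M i` to `N i` and from `N i` to `M (i+1)`, indices mod 3. -/
def IsDStar {V : Type*} [DecidableEq V] (A B : Finset V) (E : V → V → Prop) : Prop :=
  ∃ M N : ZMod 3 → Finset V,
    (∀ i j, i ≠ j → Disjoint (M i) (M j)) ∧
    (∀ i j, i ≠ j → Disjoint (N i) (N j)) ∧
    M 0 ∪ M 1 ∪ M 2 = A ∧ N 0 ∪ N 1 ∪ N 2 = B ∧
    (∀ i, 3 * (M i).card = A.card) ∧ (∀ i, 3 * (N i).card = B.card) ∧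
    (∀ u v, E u v ↔ ∃ i, (u ∈ M i ∧ v ∈ N i) ∨ (u ∈ N i ∧ v ∈ M (i + 1)))

/-!
Since the blocks are pairwise disjoint, the block of a vertex determines the block of each
out-neighbour: `M i → N i → M (i + 1) → N (i + 1) → M (i + 2)`. Four arcs thus shift the block
index by `2 ≠ 0` in `ZMod 3`, so no closed walk of length four exists.
-/

namespace DStar

open Function

variable {V : Type*} {M N : ZMod 3 → Finset V} {E : V → V → Prop}

theorem disjoint_M_N_of_disjoint_union [DecidableEq V] (hMN : Disjoint (M 0 ∪ M 1 ∪ M 2) (N 0 ∪ N 1 ∪ N 2))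
    (i j : ZMod 3) : Disjoint (M i) (N j) := by
  have hsub : ∀ (P : ZMod 3 → Finset V) k, P k ⊆ P 0 ∪ P 1 ∪ P 2 := by
    intro P k x hx
    obtain rfl | rfl | rfl : k = 0 ∨ k = 1 ∨ k = 2 := by clear hx; revert k; decide
    all_goals simp [hx]
  exact hMN.mono (hsub M i) (hsub N j)

theorem mem_N_of_arc_of_mem_M (hM : Pairwise (Disjoint on M)) (hMN : ∀ i j, Disjoint (M i) (N j))
    (hE : ∀ u v, E u v → ∃ i, (u ∈ M i ∧ v ∈ N i) ∨ (u ∈ N i ∧ v ∈ M (i + 1)))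
    {u v : V} {i : ZMod 3} (huv : E u v) (hu : u ∈ M i) : v ∈ N i := by
  obtain ⟨j, ⟨hu', hv⟩ | ⟨hu', -⟩⟩ := hE u v huv
  · obtain rfl : i = j := of_not_not fun hij => Finset.disjoint_left.mp (hM hij) hu hu'
    exact hv
  · exact absurd hu' (Finset.disjoint_left.mp (hMN i j) hu)

theorem mem_M_add_one_of_arc_of_mem_N (hN : Pairwise (Disjoint on N))
    (hMN : ∀ i j, Disjoint (M i) (N j))
    (hE : ∀ u v, E u v → ∃ i, (u ∈ M i ∧ v ∈ N i) ∨ (u ∈ N i ∧ v ∈ M (i + 1)))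
    {u v : V} {i : ZMod 3} (huv : E u v) (hu : u ∈ N i) : v ∈ M (i + 1) := by
  obtain ⟨j, ⟨hu', -⟩ | ⟨hu', hv⟩⟩ := hE u v huv
  · exact absurd hu (Finset.disjoint_left.mp (hMN j i) hu')
  · obtain rfl : i = j := of_not_not fun hij => Finset.disjoint_left.mp (hN hij) hu hu'
    exact hv

end DStar

open DStar

theorem DStar_has_no_directed_C4_general {V : Type*} [DecidableEq V]
    (M N : ZMod 3 → Finset V)
    (hMdisj : ∀ i j, i ≠ j → Disjoint (M i) (M j))
    (hNdisj : ∀ i j, i ≠ j → Disjoint (N i) (N j))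
    (hMN : Disjoint (M 0 ∪ M 1 ∪ M 2) (N 0 ∪ N 1 ∪ N 2))
    (E : V → V → Prop)
    (hE : ∀ u v, E u v ↔ ∃ i, (u ∈ M i ∧ v ∈ N i) ∨ (u ∈ N i ∧ v ∈ M (i + 1))) :
    ¬ HasDirC4 E := by
  rintro ⟨a, b, c, d, -, -, -, -, -, -, hab, hbc, hcd, hda⟩
  have hMN' := disjoint_M_N_of_disjoint_union hMN
  have hE' := fun u v => (hE u v).mp
  have hshift : ∀ i : ZMod 3, i + 1 + 1 ≠ i := by decide
  obtain ⟨i, ⟨ha, hb⟩ | ⟨ha, hb⟩⟩ := hE' a b hab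
  · have hc := mem_M_add_one_of_arc_of_mem_N hNdisj hMN' hE' hbc hb
    have hd := mem_N_of_arc_of_mem_M hMdisj hMN' hE' hcd hc
    have ha' := mem_M_add_one_of_arc_of_mem_N hNdisj hMN' hE' hda hd
    exact Finset.disjoint_left.mp (hMdisj _ _ (hshift i)) ha' ha
  · have hc := mem_N_of_arc_of_mem_M hMdisj hMN' hE' hbc hb
    have hd := mem_M_add_one_of_arc_of_mem_N hNdisj hMN' hE' hcd hc
    have ha' := mem_N_of_arc_of_mem_M hMdisj hMN' hE' hda hd
    exact Finset.disjoint_left.mp (hNdisj _ _ (hshift i)) ha' ha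

theorem DStar_has_no_directed_C4 {V : Type*} [DecidableEq V]
    (m n : ℕ) (hm : 0 < m) (hn : 0 < n) (hm3 : 3 ∣ m) (hn3 : 3 ∣ n)
    (M N : ZMod 3 → Finset V)
    (hMdisj : ∀ i j, i ≠ j → Disjoint (M i) (M j))
    (hNdisj : ∀ i j, i ≠ j → Disjoint (N i) (N j))
    (hMN : Disjoint (M 0 ∪ M 1 ∪ M 2) (N 0 ∪ N 1 ∪ N 2))
    (hMcard : ∀ i, (M i).card = m / 3) (hNcard : ∀ i, (N i).card = n / 3)
    (E : V → V → Prop)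
    (hE : ∀ u v, E u v ↔ ∃ i, (u ∈ M i ∧ v ∈ N i) ∨ (u ∈ N i ∧ v ∈ M (i + 1))) :
    ¬ HasDirC4 E :=
  DStar_has_no_directed_C4_general M N hMdisj hNdisj hMN E hE
end

section
/- Let D be an orientation of a bipartite graph on parts B2 and A3 such that the underlying graph of D[B2, A3] is complete bipartite, each vertex of B2 has exactly m1 out-neighbors in A3, where |A3| > m1 ≥ 1, and every vertex of A3 has an in-neighbor in B2. Then D has a directed cycle of length 4. -/
open Finset

theorem directed_C4_in_oriented_complete_bipartite {V : Type*} [Fintype V] [DecidableEq V]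
    (B2 A3 : Finset V) (E : V → V → Prop) [DecidableRel E]
    (hdisj : Disjoint B2 A3)
    (hbip : ∀ u v, E u v → (u ∈ B2 ∧ v ∈ A3) ∨ (u ∈ A3 ∧ v ∈ B2))
    (horient : ∀ u v, E u v → ¬ E v u)
    (hcomplete : ∀ v ∈ B2, ∀ u ∈ A3, E v u ∨ E u v)
    (m1 : ℕ) (hm1 : 1 ≤ m1) (hlt : m1 < A3.card)
    (hout : ∀ v ∈ B2, (A3.filter fun u => E v u).card = m1)
    (hin : ∀ u ∈ A3, ∃ v ∈ B2, E v u) :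
    HasDirC4 E := by
  obtain ⟨u0, hu0⟩ := Finset.card_pos.mp (Nat.lt_of_le_of_lt (Nat.zero_le _) hlt)
  obtain ⟨v, hv, hvu0⟩ := hin u0 hu0
  have hScard : (A3.filter fun u => E v u).card = m1 := hout v hv
  have hlt' : (A3.filter fun u => E v u).card < A3.card := hScard ▸ hlt
  have hss : (A3.filter fun u => E v u) ⊂ A3 :=
    (Finset.filter_subset _ _).ssubset_of_ne (fun h => absurd (congrArg Finset.card h) hlt'.ne)
  obtain ⟨ustar, hustar, hustarS⟩ := Finset.exists_of_ssubset hss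
  have hnvus : ¬ E v ustar := fun h => hustarS (Finset.mem_filter.mpr ⟨hustar, h⟩)
  obtain ⟨v', hv', hv'us⟩ := hin ustar hustar
  have hvv' : v ≠ v' := by
    rintro rfl
    exact hnvus hv'us
  have hnsub : ¬ (A3.filter fun u => E v u) ⊆ (A3.filter fun u => E v' u) := by
    intro hsub
    have heq := Finset.eq_of_subset_of_card_le hsub
      (by rw [hout v' hv', hout v hv])
    exact hustarS (heq ▸ Finset.mem_filter.mpr ⟨hustar, hv'us⟩)
  obtain ⟨w, hwS, hwS'⟩ := Finset.not_subset.mp hnsub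
  obtain ⟨hwA, hvw⟩ := Finset.mem_filter.mp hwS
  have hnv'w : ¬ E v' w := fun h => hwS' (Finset.mem_filter.mpr ⟨hwA, h⟩)
  have hwv' : E w v' := (hcomplete v' hv' w hwA).resolve_left hnv'w
  have husv : E ustar v := (hcomplete v hv ustar hustar).resolve_left hnvus
  have hvnA : v ∉ A3 := Finset.disjoint_left.mp hdisj hv
  have hv'nA : v' ∉ A3 := Finset.disjoint_left.mp hdisj hv'
  have hwus : w ≠ ustar := by
    rintro rfl
    exact hnvus hvw
  exact ⟨v, w, v', ustar,
    fun h => hvnA (h ▸ hwA), hvv', fun h => hvnA (h ▸ hustar),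
    fun h => hv'nA (h ▸ hwA), hwus, fun h => hv'nA (h.symm ▸ hustar),
    hvw, hwv', hv'us, husv⟩
end

section
/- Let D be an oriented bipartite graph with parts A (|A| = 3m1) and B (|B| = 3n1), m1, n1 ≥ 1, in which every vertex of A has out-degree exactly n1 and every vertex of B has out-degree exactly m1. If D has no directed C4, then every vertex of A also has in-degree exactly n1 and every vertex of B has in-degree exactly m1 (i.e., D is Eulerian at every vertex). -/
open Finset

/-! For `a, a' ∈ A` count the vertices `b` with `a → b → a'`, with `a' → b → a`, and with
`a → b ← a'`. Without a directed `C4` at most one of the first two kinds occurs, and it forms,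
together with the third kind, two disjoint sets of out-neighbours of `a` or of `a'`; so the total
is at most `n₁`. Summing over all pairs and counting through the middle vertex `b ∈ B` gives
`2 m₁ ∑ d⁻(b) + ∑ d⁻(b)² ≤ |A|² n₁`, while `∑ d⁻(b) = |A| n₁` counts the arcs from `A` to `B`.
With `|A| = 3m₁` and `|B| = 3n₁` this reads `∑ d⁻(b)² ≤ |B| m₁²` for in-degrees of mean `m₁`,
which is the equality case of Cauchy–Schwarz: every `d⁻(b)` equals `m₁`. Swapping the roles of
`A` and `B` gives the statement on `A`. -/

section Variance

variable {ι R : Type*} [CommRing R] [LinearOrder R] [IsStrictOrderedRing R]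

theorem Finset.eq_of_sum_eq_card_mul_of_sum_sq_le {s : Finset ι} {f : ι → R} {m : R}
    (hsum : ∑ i ∈ s, f i = #s * m) (hsq : ∑ i ∈ s, f i ^ 2 ≤ #s * m ^ 2) :
    ∀ i ∈ s, f i = m := by
  have hvar : ∑ i ∈ s, (f i - m) ^ 2 = ∑ i ∈ s, f i ^ 2 - #s * m ^ 2 := by
    simp only [sub_sq, sum_add_distrib, sum_sub_distrib, ← sum_mul, ← mul_sum, hsum,
      sum_const, nsmul_eq_mul]
    ring
  have hzero : ∑ i ∈ s, (f i - m) ^ 2 = 0 :=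
    le_antisymm (by linarith) (sum_nonneg fun i _ => sq_nonneg _)
  intro i hi
  have := (sum_eq_zero_iff_of_nonneg fun i _ => sq_nonneg (f i - m)).mp hzero i hi
  exact sub_eq_zero.mp (pow_eq_zero_iff two_ne_zero |>.mp this)

end Variance

section Counting

variable {V : Type*} [Fintype V] (E : V → V → Prop) [DecidableRel E]

def numTwoPaths (u w : V) : ℕ := #{b | E u b ∧ E b w}

def numCommonOut (u w : V) : ℕ := #{b | E u b ∧ E w b}

variable {E}

theorem numCommonOut_comm (u w : V) : numCommonOut E u w = numCommonOut E w u := by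
  simp only [numCommonOut, and_comm]

theorem numTwoPaths_add_numCommonOut_le_outDeg (hasymm : ∀ u v, E u v → ¬ E v u) (u w : V) :
    numTwoPaths E u w + numCommonOut E u w ≤ OutDeg E u := by
  classical
  rw [numTwoPaths, numCommonOut, ← card_union_of_disjoint]
  · refine card_le_card fun b hb => ?_
    simp only [mem_union, mem_filter, mem_univ, true_and] at hb ⊢
    tauto
  · exact disjoint_filter.mpr fun b _ h h' => hasymm _ _ h.2 h'.2

theorem numTwoPaths_eq_zero_or (hasymm : ∀ u v, E u v → ¬ E v u) (hC4 : ¬ HasDirC4 E)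
    (u w : V) : numTwoPaths E u w = 0 ∨ numTwoPaths E w u = 0 := by
  simp only [numTwoPaths, card_eq_zero, filter_eq_empty_iff, mem_univ, true_implies]
  -- the 2-paths `u → b → w` and `w → b' → u` close up to a directed 4-cycle;
  -- asymmetry makes its four vertices distinct
  by_contra! ⟨⟨b, hub, hbw⟩, ⟨b', hwb', hb'u⟩⟩
  have hirr : ∀ x, ¬ E x x := fun x h => hasymm x x h h
  refine hC4 ⟨u, b, w, b', ?_, ?_, ?_, ?_, ?_, ?_, hub, hbw, hwb', hb'u⟩
  all_goals rintro rfl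
  all_goals first
    | exact hirr _ ‹_›
    | exact hasymm _ _ hub hbw
    | exact hasymm _ _ hbw hwb'

theorem numTwoPaths_add_numTwoPaths_add_numCommonOut_le
    (hasymm : ∀ u v, E u v → ¬ E v u) (hC4 : ¬ HasDirC4 E) {n : ℕ} {u w : V}
    (hu : OutDeg E u ≤ n) (hw : OutDeg E w ≤ n) :
    numTwoPaths E u w + numTwoPaths E w u + numCommonOut E u w ≤ n := by
  have hu' := numTwoPaths_add_numCommonOut_le_outDeg hasymm u w
  have hw' := numTwoPaths_add_numCommonOut_le_outDeg hasymm w u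
  rw [numCommonOut_comm] at hw'
  rcases numTwoPaths_eq_zero_or hasymm hC4 u w with h | h <;> omega

theorem sum_sum_numTwoPaths (S : Finset V) :
    ∑ u ∈ S, ∑ w ∈ S, numTwoPaths E u w = ∑ b, #{u ∈ S | E u b} * #{w ∈ S | E b w} := by
  simp only [numTwoPaths, card_filter, sum_mul_sum, ite_zero_mul_ite_zero, mul_one]
  exact (sum_congr rfl fun u _ => sum_comm).trans sum_comm

theorem sum_sum_numCommonOut (S : Finset V) :
    ∑ u ∈ S, ∑ w ∈ S, numCommonOut E u w = ∑ b, #{u ∈ S | E u b} ^ 2 := by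
  simp only [numCommonOut, card_filter, sq, sum_mul_sum, ite_zero_mul_ite_zero, mul_one]
  exact (sum_congr rfl fun u _ => sum_comm).trans sum_comm

theorem two_mul_sum_mul_add_sum_sq_le (hasymm : ∀ u v, E u v → ¬ E v u)
    (hC4 : ¬ HasDirC4 E) (S : Finset V) {n : ℕ} (hout : ∀ u ∈ S, OutDeg E u ≤ n) :
    2 * ∑ b, #{u ∈ S | E u b} * #{w ∈ S | E b w} + ∑ b, #{u ∈ S | E u b} ^ 2 ≤ #S ^ 2 * n :=
  calc 2 * ∑ b, #{u ∈ S | E u b} * #{w ∈ S | E b w} + ∑ b, #{u ∈ S | E u b} ^ 2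
      = ∑ u ∈ S, ∑ w ∈ S, (numTwoPaths E u w + numTwoPaths E w u + numCommonOut E u w) := by
        simp only [sum_add_distrib, sum_sum_numCommonOut]
        rw [sum_comm (f := fun u w => numTwoPaths E w u), sum_sum_numTwoPaths]
        ring
    _ ≤ ∑ u ∈ S, ∑ w ∈ S, n := sum_le_sum fun u hu => sum_le_sum fun w hw =>
        numTwoPaths_add_numTwoPaths_add_numCommonOut_le hasymm hC4 (hout u hu) (hout w hw)
    _ = #S ^ 2 * n := by simp only [sum_const, smul_eq_mul]; ring

end Counting

section Bipartite

variable {V : Type*} {E : V → V → Prop} {A B : Finset V}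

theorem mem_right_of_adj_of_mem_left (hdisj : Disjoint A B)
    (hbip : ∀ u v, E u v → (u ∈ A ∧ v ∈ B) ∨ (u ∈ B ∧ v ∈ A)) {u v : V} (h : E u v)
    (hu : u ∈ A) : v ∈ B :=
  (hbip u v h).elim And.right fun h' => absurd hu (disjoint_right.mp hdisj h'.1)

theorem mem_left_of_adj_of_mem_right (hdisj : Disjoint A B)
    (hbip : ∀ u v, E u v → (u ∈ A ∧ v ∈ B) ∨ (u ∈ B ∧ v ∈ A)) {u v : V} (h : E u v)
    (hv : v ∈ B) : u ∈ A :=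
  (hbip u v h).elim And.left fun h' => absurd hv (disjoint_left.mp hdisj h'.2)

variable [Fintype V] [DecidableRel E]

theorem card_filter_eq_inDeg {S : Finset V} {b : V} (h : ∀ u, E u b → u ∈ S) :
    #{u ∈ S | E u b} = InDeg E b := by
  rw [InDeg, filter_congr_decidable]
  congr 1
  ext u
  simpa using fun h' => h u h'

theorem card_filter_eq_outDeg {S : Finset V} {b : V} (h : ∀ w, E b w → w ∈ S) :
    #{w ∈ S | E b w} = OutDeg E b := by
  rw [OutDeg]
  congr 1
  ext w
  simpa using fun h' => h w h'

theorem sum_inDeg_eq {n : ℕ} (hdisj : Disjoint A B)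
    (hbip : ∀ u v, E u v → (u ∈ A ∧ v ∈ B) ∨ (u ∈ B ∧ v ∈ A))
    (houtA : ∀ u ∈ A, OutDeg E u = n) :
    ∑ b ∈ B, InDeg E b = #A * n :=
  calc ∑ b ∈ B, InDeg E b = ∑ b ∈ B, #{u ∈ A | E u b} := sum_congr rfl fun b hb =>
        (card_filter_eq_inDeg fun u h => mem_left_of_adj_of_mem_right hdisj hbip h hb).symm
    _ = ∑ u ∈ A, #{b ∈ B | E u b} :=
        (sum_card_bipartiteAbove_eq_sum_card_bipartiteBelow E).symm
    _ = ∑ u ∈ A, n := sum_congr rfl fun u hu =>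
        (card_filter_eq_outDeg fun b h => mem_right_of_adj_of_mem_left hdisj hbip h hu).trans
          (houtA u hu)
    _ = #A * n := by rw [sum_const, smul_eq_mul]

theorem two_mul_sum_inDeg_add_sum_sq_inDeg_le {m n : ℕ} (hdisj : Disjoint A B)
    (hbip : ∀ u v, E u v → (u ∈ A ∧ v ∈ B) ∨ (u ∈ B ∧ v ∈ A))
    (hasymm : ∀ u v, E u v → ¬ E v u) (houtA : ∀ u ∈ A, OutDeg E u = n)
    (houtB : ∀ v ∈ B, OutDeg E v = m) (hC4 : ¬ HasDirC4 E) :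
    2 * (m * ∑ b ∈ B, InDeg E b) + ∑ b ∈ B, InDeg E b ^ 2 ≤ #A ^ 2 * n := by
  have hF0 : ∀ b ∉ B, #{u ∈ A | E u b} = 0 := fun b hb => card_eq_zero.mpr <|
    filter_eq_empty_iff.mpr fun u hu h => hb (mem_right_of_adj_of_mem_left hdisj hbip h hu)
  have hFB : ∀ b ∈ B, #{u ∈ A | E u b} = InDeg E b := fun b hb =>
    card_filter_eq_inDeg fun u h => mem_left_of_adj_of_mem_right hdisj hbip h hb
  have hGB : ∀ b ∈ B, #{w ∈ A | E b w} = m := fun b hb =>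
    (card_filter_eq_outDeg fun w h => mem_right_of_adj_of_mem_left hdisj.symm
      (fun u v h => (hbip u v h).symm) h hb).trans (houtB b hb)
  have hFG : ∑ b, #{u ∈ A | E u b} * #{w ∈ A | E b w} = m * ∑ b ∈ B, InDeg E b := by
    rw [← sum_subset (subset_univ B) fun b _ hb => by rw [hF0 b hb, zero_mul], mul_sum]
    exact sum_congr rfl fun b hb => by rw [hFB b hb, hGB b hb, mul_comm]
  have hFF : ∑ b, #{u ∈ A | E u b} ^ 2 = ∑ b ∈ B, InDeg E b ^ 2 := by
    rw [← sum_subset (subset_univ B) fun b _ hb => by rw [hF0 b hb, zero_pow two_ne_zero]]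
    exact sum_congr rfl fun b hb => by rw [hFB b hb]
  rw [← hFG, ← hFF]
  exact two_mul_sum_mul_add_sum_sq_le hasymm hC4 A fun u hu => (houtA u hu).le

theorem inDeg_eq_of_not_hasDirC4 {m n : ℕ} (hAcard : #A = 3 * m) (hBcard : #B = 3 * n)
    (hdisj : Disjoint A B)
    (hbip : ∀ u v, E u v → (u ∈ A ∧ v ∈ B) ∨ (u ∈ B ∧ v ∈ A))
    (hasymm : ∀ u v, E u v → ¬ E v u) (houtA : ∀ u ∈ A, OutDeg E u = n)
    (houtB : ∀ v ∈ B, OutDeg E v = m) (hC4 : ¬ HasDirC4 E) :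
    ∀ v ∈ B, InDeg E v = m := by
  have hsum := sum_inDeg_eq hdisj hbip houtA
  have key := two_mul_sum_inDeg_add_sum_sq_inDeg_le hdisj hbip hasymm houtA houtB hC4
  rw [hsum, hAcard] at key
  have hmean : ∑ b ∈ B, (InDeg E b : ℤ) = #B * (m : ℤ) := by
    have : ∑ b ∈ B, InDeg E b = #B * m := by rw [hsum, hAcard, hBcard]; ring
    exact_mod_cast this
  have hsq : ∑ b ∈ B, (InDeg E b : ℤ) ^ 2 ≤ #B * (m : ℤ) ^ 2 := by
    have : ∑ b ∈ B, InDeg E b ^ 2 ≤ #B * m ^ 2 := by rw [hBcard]; nlinarith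
    exact_mod_cast this
  exact_mod_cast eq_of_sum_eq_card_mul_of_sum_sq_le hmean hsq

end Bipartite

theorem indegrees_of_C4_free_regular_oriented_bipartite_general {V : Type*} [Fintype V]
    (A B : Finset V) (E : V → V → Prop) [DecidableRel E]
    (m1 n1 : ℕ)
    (hAcard : A.card = 3 * m1) (hBcard : B.card = 3 * n1)
    (hdisj : Disjoint A B)
    (hbip : ∀ u v, E u v → (u ∈ A ∧ v ∈ B) ∨ (u ∈ B ∧ v ∈ A))
    (horient : ∀ u v, E u v → ¬ E v u)
    (houtA : ∀ u ∈ A, OutDeg E u = n1)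
    (houtB : ∀ v ∈ B, OutDeg E v = m1)
    (hnoC4 : ¬ HasDirC4 E) :
    (∀ u ∈ A, InDeg E u = n1) ∧ (∀ v ∈ B, InDeg E v = m1) :=
  ⟨inDeg_eq_of_not_hasDirC4 hBcard hAcard hdisj.symm (fun u v h => (hbip u v h).symm) horient
      houtB houtA hnoC4,
    inDeg_eq_of_not_hasDirC4 hAcard hBcard hdisj hbip horient houtA houtB hnoC4⟩

theorem indegrees_of_C4_free_regular_oriented_bipartite {V : Type*} [Fintype V] [DecidableEq V]
    (A B : Finset V) (E : V → V → Prop) [DecidableRel E]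
    (m1 n1 : ℕ) (hm1 : 1 ≤ m1) (hn1 : 1 ≤ n1)
    (hAcard : A.card = 3 * m1) (hBcard : B.card = 3 * n1)
    (hdisj : Disjoint A B) (hcover : A ∪ B = Finset.univ)
    (hbip : ∀ u v, E u v → (u ∈ A ∧ v ∈ B) ∨ (u ∈ B ∧ v ∈ A))
    (horient : ∀ u v, E u v → ¬ E v u)
    (houtA : ∀ u ∈ A, OutDeg E u = n1)
    (houtB : ∀ v ∈ B, OutDeg E v = m1)
    (hnoC4 : ¬ HasDirC4 E) :
    (∀ u ∈ A, InDeg E u = n1) ∧ (∀ v ∈ B, InDeg E v = m1) :=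
  indegrees_of_C4_free_regular_oriented_bipartite_general A B E m1 n1 hAcard hBcard hdisj hbip
    horient houtA houtB hnoC4
end

section
/- Let D be an oriented bipartite graph with bipartition (A,B) having no directed C4. Suppose k1 is the maximum in-degree over A, k2 is the maximum in-degree over B, every vertex of A has out-degree at least n1 and every vertex of B has out-degree at least m1. Fix u0 ∈ A with in-degree k1, set B1 = N^-(u0), B2 a set of n1 out-neighbors of u0, A3 = N^+(B2), B3 = N^+(A3) \ B2. Then |B3| ≥ m1·n1 / k2, and consequently |B| ≥ k1 + n1 + m1·n1/k2. -/
open Finset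

/-
Count the arcs of the two-step walks `B2 → A3 → B3`. At least `m1 * n1` arcs leave `B2`, and all
of them land in `A3`. A vertex `w ∈ A3` has at least `n1 = |B2|` out-neighbours; since the digraph
is oriented, each in-neighbour of `w` in `B2` is a vertex of `B2` that is not an out-neighbour, so
`w` has at least as many out-neighbours outside `B2`, i.e. in `B3`, as in-neighbours in `B2`. Hence
at least `m1 * n1` arcs enter `B3`, each of its vertices receiving at most `k2`.
For the bound on `|B|`: `B1`, `B2`, `B3` are disjoint subsets of `B`, where a vertex of `B1 ∩ B3`
would close a directed 4-cycle `u0 → B2 → A3 → B3 → u0`.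
-/

section

variable {V : Type*} {E : V → V → Prop}

theorem hasDirC4_of_arcs (horient : ∀ u v, E u v → ¬ E v u) {a b c d : V} (hbd : b ≠ d)
    (hab : E a b) (hbc : E b c) (hcd : E c d) (hda : E d a) : HasDirC4 E := by
  have hirr : ∀ u, ¬ E u u := fun u h => horient u u h h
  refine ⟨a, b, c, d, ?_, ?_, ?_, ?_, hbd, ?_, hab, hbc, hcd, hda⟩
  · rintro rfl; exact hirr a hab
  · rintro rfl; exact horient a b hab hbc
  · rintro rfl; exact hirr a hda
  · rintro rfl; exact hirr b hbc
  · rintro rfl; exact hirr c hcd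

theorem mem_left_iff_mem_right_of_arc {A B : Finset V} (hdisj : Disjoint A B)
    (hbip : ∀ u v, E u v → (u ∈ A ∧ v ∈ B) ∨ (u ∈ B ∧ v ∈ A)) {u v : V} (huv : E u v) :
    u ∈ A ↔ v ∈ B := by
  rcases hbip u v huv with ⟨hu, hv⟩ | ⟨hu, hv⟩
  · exact ⟨fun _ => hv, fun _ => hu⟩
  · exact ⟨fun h => absurd hu (disjoint_left.mp hdisj h),
      fun h => absurd h (disjoint_left.mp hdisj hv)⟩

theorem mem_right_iff_mem_left_of_arc {A B : Finset V} (hdisj : Disjoint A B)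
    (hbip : ∀ u v, E u v → (u ∈ A ∧ v ∈ B) ∨ (u ∈ B ∧ v ∈ A)) {u v : V} (huv : E u v) :
    u ∈ B ↔ v ∈ A :=
  mem_left_iff_mem_right_of_arc hdisj.symm (fun u v h => (hbip u v h).symm) huv

theorem card_bipartiteBelow_add_card_bipartiteAbove_le [DecidableEq V] [DecidableRel E]
    (horient : ∀ u v, E u v → ¬ E v u) (S : Finset V) (w : V) :
    #(S.bipartiteBelow E w) + #(S.bipartiteAbove E w) ≤ #S := by
  rw [← card_union_of_disjoint]
  · exact card_le_card (union_subset (filter_subset _ _) (filter_subset _ _))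
  · exact disjoint_left.mpr fun v hin hout =>
      horient v w ((mem_bipartiteBelow E).mp hin).2 ((mem_bipartiteAbove E).mp hout).2

variable [Fintype V] [DecidableRel E]

def outNbhd (E : V → V → Prop) [DecidableRel E] (S : Finset V) : Finset V :=
  univ.filter fun w => ∃ v ∈ S, E v w

theorem outNbhd_subset_right {A B S : Finset V} (hdisj : Disjoint A B)
    (hbip : ∀ u v, E u v → (u ∈ A ∧ v ∈ B) ∨ (u ∈ B ∧ v ∈ A)) (hS : S ⊆ A) :
    outNbhd E S ⊆ B := by
  intro w hw
  obtain ⟨v, hv, hvw⟩ := (mem_filter.mp hw).2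
  exact (mem_left_iff_mem_right_of_arc hdisj hbip hvw).1 (hS hv)

theorem outNbhd_subset_left {A B S : Finset V} (hdisj : Disjoint A B)
    (hbip : ∀ u v, E u v → (u ∈ A ∧ v ∈ B) ∨ (u ∈ B ∧ v ∈ A)) (hS : S ⊆ B) :
    outNbhd E S ⊆ A :=
  outNbhd_subset_right hdisj.symm (fun u v h => (hbip u v h).symm) hS

theorem outDeg_eq_card_bipartiteAbove_outNbhd {S : Finset V} {v : V} (hv : v ∈ S) :
    OutDeg E v = #((outNbhd E S).bipartiteAbove E v) := by
  unfold OutDeg outNbhd bipartiteAbove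
  congr 1
  ext w
  simp only [mem_filter, mem_univ, true_and]
  exact ⟨fun h => ⟨⟨v, hv, h⟩, h⟩, And.right⟩

theorem card_bipartiteBelow_le_inDeg (T : Finset V) (z : V) :
    #(T.bipartiteBelow E z) ≤ InDeg E z :=
  card_le_card (filter_subset_filter _ (subset_univ T))

variable [DecidableEq V]

theorem card_bipartiteBelow_le_card_outNbrs_sdiff
    (horient : ∀ u v, E u v → ¬ E v u) {S : Finset V} {w : V} (hw : #S ≤ OutDeg E w) :
    #(S.bipartiteBelow E w) ≤ #(univ.filter (E w ·) \ S) := by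
  have hinter : univ.filter (E w ·) ∩ S = S.bipartiteAbove E w := by
    ext v; simp [bipartiteAbove, and_comm]
  have hsplit := card_sdiff_add_card_inter (univ.filter (E w ·)) S
  have hbound := card_bipartiteBelow_add_card_bipartiteAbove_le horient S w
  rw [hinter] at hsplit
  unfold OutDeg at hw
  omega

theorem mul_card_le_mul_card_outNbhd_outNbhd_sdiff (horient : ∀ u v, E u v → ¬ E v u)
    {S : Finset V} {m k : ℕ} (hS : ∀ v ∈ S, m ≤ OutDeg E v)
    (hT : ∀ w ∈ outNbhd E S, #S ≤ OutDeg E w)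
    (hU : ∀ z ∈ outNbhd E (outNbhd E S) \ S, InDeg E z ≤ k) :
    m * #S ≤ k * #(outNbhd E (outNbhd E S) \ S) := by
  set T := outNbhd E S
  set U := outNbhd E T \ S
  have hout : ∀ w ∈ T, univ.filter (E w ·) \ S ⊆ U.bipartiteAbove E w := by
    intro w hw z hz
    simp only [U, outNbhd, mem_bipartiteAbove, mem_sdiff, mem_filter, mem_univ, true_and] at hz ⊢
    exact ⟨⟨⟨w, hw, hz.1⟩, hz.2⟩, hz.1⟩
  calc m * #S = ∑ _v ∈ S, m := by rw [sum_const, smul_eq_mul, mul_comm]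
    _ ≤ ∑ v ∈ S, #(T.bipartiteAbove E v) := sum_le_sum fun v hv =>
        (hS v hv).trans_eq (outDeg_eq_card_bipartiteAbove_outNbhd hv)
    _ = ∑ w ∈ T, #(S.bipartiteBelow E w) := sum_card_bipartiteAbove_eq_sum_card_bipartiteBelow E
    _ ≤ ∑ w ∈ T, #(U.bipartiteAbove E w) := sum_le_sum fun w hw =>
        (card_bipartiteBelow_le_card_outNbrs_sdiff horient (hT w hw)).trans
          (card_le_card (hout w hw))
    _ = ∑ z ∈ U, #(T.bipartiteBelow E z) := sum_card_bipartiteAbove_eq_sum_card_bipartiteBelow E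
    _ ≤ ∑ _z ∈ U, k := sum_le_sum fun z hz => (card_bipartiteBelow_le_inDeg T z).trans (hU z hz)
    _ = k * #U := by rw [sum_const, smul_eq_mul, mul_comm]

theorem disjoint_inNbrs_outNbhd_outNbhd_sdiff (horient : ∀ u v, E u v → ¬ E v u)
    (hnoC4 : ¬ HasDirC4 E) {u : V} {S : Finset V} (hS : ∀ v ∈ S, E u v) :
    Disjoint (univ.filter (E · u)) (outNbhd E (outNbhd E S) \ S) := by
  refine disjoint_left.mpr fun z hzu hz => ?_
  obtain ⟨hz, hzS⟩ := mem_sdiff.mp hz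
  obtain ⟨w, hw, hwz⟩ := (mem_filter.mp hz).2
  obtain ⟨v, hv, hvw⟩ := (mem_filter.mp hw).2
  exact hnoC4 (hasDirC4_of_arcs horient (ne_of_mem_of_not_mem hv hzS) (hS v hv) hvw hwz
    (mem_filter.mp hzu).2)

theorem inDeg_add_card_add_card_outNbhd_outNbhd_sdiff_le (horient : ∀ u v, E u v → ¬ E v u)
    (hnoC4 : ¬ HasDirC4 E) {u : V} {S B : Finset V} (hS : ∀ v ∈ S, E u v)
    (hB : univ.filter (E · u) ∪ S ∪ (outNbhd E (outNbhd E S) \ S) ⊆ B) :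
    InDeg E u + #S + #(outNbhd E (outNbhd E S) \ S) ≤ #B := by
  have hinS : Disjoint (univ.filter (E · u)) S :=
    disjoint_left.mpr fun v hvu hv => horient u v (hS v hv) (mem_filter.mp hvu).2
  refine le_trans (le_of_eq ?_) (card_le_card hB)
  rw [card_union_of_disjoint (disjoint_union_left.mpr
      ⟨disjoint_inNbrs_outNbhd_outNbhd_sdiff horient hnoC4 hS, disjoint_sdiff⟩),
    card_union_of_disjoint hinS]
  rfl

end

theorem B3_lower_bound_general {V : Type*} [Fintype V] [DecidableEq V]
    (A B : Finset V) (E : V → V → Prop) [DecidableRel E]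
    (hdisj : Disjoint A B)
    (hbip : ∀ u v, E u v → (u ∈ A ∧ v ∈ B) ∨ (u ∈ B ∧ v ∈ A))
    (horient : ∀ u v, E u v → ¬ E v u)
    (hnoC4 : ¬ HasDirC4 E)
    (k1 k2 m1 n1 : ℕ)
    (hk2max : ∀ v ∈ B, InDeg E v ≤ k2)
    (houtA : ∀ u ∈ A, n1 ≤ OutDeg E u)
    (houtB : ∀ v ∈ B, m1 ≤ OutDeg E v)
    (u0 : V) (hu0 : u0 ∈ A) (hu0deg : InDeg E u0 = k1)
    (B2 A3 B3 : Finset V)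
    (hB2 : B2 ⊆ Finset.univ.filter fun v => E u0 v) (hB2card : B2.card = n1)
    (hA3 : A3 = Finset.univ.filter fun w => ∃ v ∈ B2, E v w)
    (hB3 : B3 = (Finset.univ.filter fun z => ∃ w ∈ A3, E w z) \ B2) :
    m1 * n1 ≤ k2 * B3.card ∧ k2 * (k1 + n1) + m1 * n1 ≤ k2 * B.card := by
  subst hA3 hB3 hu0deg hB2card
  have hu0B2 : ∀ v ∈ B2, E u0 v := fun v hv => (mem_filter.mp (hB2 hv)).2
  have hB2B : B2 ⊆ B := fun v hv =>
    (mem_left_iff_mem_right_of_arc hdisj hbip (hu0B2 v hv)).1 hu0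
  have hB1B : univ.filter (E · u0) ⊆ B := fun v hv =>
    (mem_right_iff_mem_left_of_arc hdisj hbip (mem_filter.mp hv).2).2 hu0
  have hA3A : outNbhd E B2 ⊆ A := outNbhd_subset_left hdisj hbip hB2B
  have hB3B : outNbhd E (outNbhd E B2) \ B2 ⊆ B :=
    sdiff_subset.trans (outNbhd_subset_right hdisj hbip hA3A)
  have hB3card : m1 * #B2 ≤ k2 * #(outNbhd E (outNbhd E B2) \ B2) :=
    mul_card_le_mul_card_outNbhd_outNbhd_sdiff horient (fun v hv => houtB v (hB2B hv))
      (fun w hw => houtA w (hA3A hw)) (fun z hz => hk2max z (hB3B hz))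
  have hBcard : InDeg E u0 + #B2 + #(outNbhd E (outNbhd E B2) \ B2) ≤ #B :=
    inDeg_add_card_add_card_outNbhd_outNbhd_sdiff_le horient hnoC4 hu0B2
      (union_subset (union_subset hB1B hB2B) hB3B)
  exact ⟨hB3card, by linarith [Nat.mul_le_mul_left k2 hBcard]⟩

theorem B3_lower_bound {V : Type*} [Fintype V] [DecidableEq V]
    (A B : Finset V) (E : V → V → Prop) [DecidableRel E]
    (hdisj : Disjoint A B) (hcover : A ∪ B = Finset.univ)
    (hbip : ∀ u v, E u v → (u ∈ A ∧ v ∈ B) ∨ (u ∈ B ∧ v ∈ A))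
    (horient : ∀ u v, E u v → ¬ E v u)
    (hnoC4 : ¬ HasDirC4 E)
    (k1 k2 m1 n1 : ℕ)
    (hk1max : ∀ u ∈ A, InDeg E u ≤ k1)
    (hk2max : ∀ v ∈ B, InDeg E v ≤ k2)
    (houtA : ∀ u ∈ A, n1 ≤ OutDeg E u)
    (houtB : ∀ v ∈ B, m1 ≤ OutDeg E v)
    (u0 : V) (hu0 : u0 ∈ A) (hu0deg : InDeg E u0 = k1)
    (B1 B2 A3 B3 : Finset V)
    (hB1 : B1 = Finset.univ.filter fun v => E v u0)
    (hB2 : B2 ⊆ Finset.univ.filter fun v => E u0 v) (hB2card : B2.card = n1)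
    (hA3 : A3 = Finset.univ.filter fun w => ∃ v ∈ B2, E v w)
    (hB3 : B3 = (Finset.univ.filter fun z => ∃ w ∈ A3, E w z) \ B2) :
    m1 * n1 ≤ k2 * B3.card ∧ k2 * (k1 + n1) + m1 * n1 ≤ k2 * B.card :=
  B3_lower_bound_general A B E hdisj hbip horient hnoC4 k1 k2 m1 n1 hk2max houtA houtB u0 hu0 hu0deg
    B2 A3 B3 hB2 hB2card hA3 hB3
end

section
/- Reduction lemma: Suppose the statement 'every oriented bipartite graph with parts of sizes m, n (both divisible by 3, both ≥ 3) in which A-vertices have out-degree ≥ n/3 and B-vertices have out-degree ≥ m/3 either has a directed C4 or equals D*(m,n)' holds. Then for arbitrary m', n' ≥ 2 (not both divisible by 3), every oriented bipartite graph with parts of sizes m', n' satisfying out-degree ≥ n'/3 on A and ≥ m'/3 on B contains a directed C4. -/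
open Finset

/-!
Pad each part up to a multiple of 3 by adjoining sources that send an arc to every vertex of the
opposite part. The degree conditions survive, a directed 4-cycle never passes through a source, and
the padded digraph is not `D*`, in which every vertex receives an arc.
-/

lemma IsDStar.exists_arc_into {V : Type*} [DecidableEq V] {A B : Finset V}
    {E : V → V → Prop} (hE : IsDStar A B E) (hA : 0 < A.card) (hB : 0 < B.card)
    {x : V} (hx : x ∈ A ∪ B) : ∃ y, E y x := by
  obtain ⟨M, N, -, -, rfl, rfl, hM, hN, harc⟩ := hE
  have mem_block {P : ZMod 3 → Finset V} (h : x ∈ P 0 ∪ P 1 ∪ P 2) : ∃ i, x ∈ P i := by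
    simp only [mem_union] at h
    rcases h with (h | h) | h
    exacts [⟨0, h⟩, ⟨1, h⟩, ⟨2, h⟩]
  rcases mem_union.1 hx with hx | hx
  · obtain ⟨i, hi⟩ := mem_block hx
    obtain ⟨y, hy⟩ := card_pos.1 (show 0 < (N (i - 1)).card by have := hN (i - 1); omega)
    exact ⟨y, (harc y x).2 ⟨i - 1, .inr ⟨hy, by rwa [sub_add_cancel]⟩⟩⟩
  · obtain ⟨i, hi⟩ := mem_block hx
    obtain ⟨y, hy⟩ := card_pos.1 (show 0 < (M i).card by have := hM i; omega)
    exact ⟨y, (harc y x).2 ⟨i, .inl ⟨hy, hi⟩⟩⟩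

section AddSources

variable {V α β : Type*} (A B : Finset V) (E : V → V → Prop)

/-- The vertices of `α` join the part `A` and those of `β` the part `B`; each new vertex is a source
with an arc to every vertex of the opposite original part. -/
def addSources : V ⊕ (α ⊕ β) → V ⊕ (α ⊕ β) → Prop
  | .inl u, .inl v => E u v
  | .inr (.inl _), .inl v => v ∈ B
  | .inr (.inr _), .inl v => v ∈ A
  | _, .inr _ => False

instance [DecidableEq V] [DecidableRel E] : DecidableRel (addSources (α := α) (β := β) A B E)
  | .inl u, .inl v => inferInstanceAs (Decidable (E u v))
  | .inr (.inl _), .inl v => inferInstanceAs (Decidable (v ∈ B))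
  | .inr (.inr _), .inl v => inferInstanceAs (Decidable (v ∈ A))
  | .inl _, .inr _ | .inr (.inl _), .inr _ | .inr (.inr _), .inr _ => instDecidableFalse

variable {A B E}

@[simp] lemma addSources_inl_inl {u v : V} :
    addSources (α := α) (β := β) A B E (.inl u) (.inl v) ↔ E u v := .rfl

@[simp] lemma addSources_inr_inl_inl {a : α} {v : V} :
    addSources (β := β) A B E (.inr (.inl a)) (.inl v) ↔ v ∈ B := .rfl

@[simp] lemma addSources_inr_inr_inl {b : β} {v : V} :
    addSources (α := α) A B E (.inr (.inr b)) (.inl v) ↔ v ∈ A := .rfl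

@[simp] lemma not_addSources_inr (x : V ⊕ (α ⊕ β)) (y : α ⊕ β) :
    ¬ addSources A B E x (.inr y) := by
  rcases x with _ | _ | _ <;> exact id

lemma HasDirC4.of_addSources (h : HasDirC4 (addSources (α := α) (β := β) A B E)) :
    HasDirC4 E := by
  obtain ⟨a, b, c, d, hab, hac, had, hbc, hbd, hcd, hab', hbc', hcd', hda'⟩ := h
  -- every vertex of the cycle receives an arc, so none of them is a new source
  rcases a with a | a; swap; · exact absurd hda' (not_addSources_inr _ _)
  rcases b with b | b; swap; · exact absurd hab' (not_addSources_inr _ _)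
  rcases c with c | c; swap; · exact absurd hbc' (not_addSources_inr _ _)
  rcases d with d | d; swap; · exact absurd hcd' (not_addSources_inr _ _)
  simp only [ne_eq, Sum.inl.injEq, addSources_inl_inl] at *
  exact ⟨a, b, c, d, hab, hac, had, hbc, hbd, hcd, hab', hbc', hcd', hda'⟩

lemma addSources_asymm (h : ∀ u v, E u v → ¬ E v u) :
    ∀ x y, addSources (α := α) (β := β) A B E x y → ¬ addSources A B E y x := by
  rintro (u | a | b) (v | _) hxy <;> simp_all [addSources]

variable [Fintype α] [Fintype β]

lemma addSources_bipartite (h : ∀ u v, E u v → (u ∈ A ∧ v ∈ B) ∨ (u ∈ B ∧ v ∈ A)) :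
    ∀ x y, addSources A B E x y →
      (x ∈ A.disjSum (univ.map .inl) ∧ y ∈ B.disjSum (univ.map .inr)) ∨
      (x ∈ B.disjSum (univ.map (.inr : β ↪ α ⊕ β)) ∧ y ∈ A.disjSum (univ.map .inl)) := by
  rintro (u | a | b) (v | _) hxy <;> simp_all [addSources]

lemma disjoint_disjSum_map_inl_map_inr (h : Disjoint A B) :
    Disjoint (A.disjSum (univ.map .inl)) (B.disjSum (univ.map (.inr : β ↪ α ⊕ β))) := by
  rw [disjoint_left]
  rintro (u | a | b) hA hB <;> simp only [inl_mem_disjSum, inr_mem_disjSum, mem_map] at hA hB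
  · exact disjoint_left.1 h hA hB
  all_goals simp_all

lemma disjSum_union_disjSum_eq_univ [Fintype V] [DecidableEq V] [DecidableEq α] [DecidableEq β]
    (h : A ∪ B = univ) :
    A.disjSum (univ.map .inl) ∪ B.disjSum (univ.map (.inr : β ↪ α ⊕ β)) = univ := by
  ext (u | a | b)
  · simp only [mem_union, inl_mem_disjSum, mem_univ, iff_true]
    exact mem_union.1 (h ▸ mem_univ u)
  all_goals simp

variable [Fintype V] [DecidableEq V] [DecidableRel E]

lemma outDeg_addSources_inl (u : V) :
    OutDeg (addSources (α := α) (β := β) A B E) (.inl u) = OutDeg E u := by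
  have : univ.filter (addSources (α := α) (β := β) A B E (.inl u)) =
      (univ.filter (E u)).map .inl := by
    ext (v | _ | _) <;> simp
  rw [OutDeg, this, card_map, OutDeg]

lemma outDeg_addSources_inr_inl (a : α) :
    OutDeg (addSources (β := β) A B E) (.inr (.inl a)) = B.card := by
  have : univ.filter (addSources (α := α) (β := β) A B E (.inr (.inl a))) = B.map .inl := by
    ext (v | _ | _) <;> simp
  rw [OutDeg, this, card_map]

lemma outDeg_addSources_inr_inr (b : β) :
    OutDeg (addSources (α := α) A B E) (.inr (.inr b)) = A.card := by
  have : univ.filter (addSources (α := α) (β := β) A B E (.inr (.inr b))) = A.map .inl := by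
    ext (v | _ | _) <;> simp
  rw [OutDeg, this, card_map]

lemma le_mul_outDeg_addSources_of_mem_left {k c : ℕ} (h : ∀ u ∈ A, c ≤ k * OutDeg E u)
    (hc : c ≤ k * B.card) :
    ∀ x ∈ A.disjSum (univ.map (.inl : α ↪ α ⊕ β)), c ≤ k * OutDeg (addSources A B E) x := by
  rintro (u | a | b) hx
  · rw [outDeg_addSources_inl]
    exact h u (by simpa using hx)
  · rwa [outDeg_addSources_inr_inl]
  · simp at hx

lemma le_mul_outDeg_addSources_of_mem_right {k c : ℕ} (h : ∀ v ∈ B, c ≤ k * OutDeg E v)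
    (hc : c ≤ k * A.card) :
    ∀ x ∈ B.disjSum (univ.map (.inr : β ↪ α ⊕ β)), c ≤ k * OutDeg (addSources A B E) x := by
  rintro (v | a | b) hx
  · rw [outDeg_addSources_inl]
    exact h v (by simpa using hx)
  · simp at hx
  · rwa [outDeg_addSources_inr_inr]

end AddSources

theorem reduction_to_divisible_by_three
    (H : ∀ (V : Type) [Fintype V] [DecidableEq V] (A B : Finset V)
        (E : V → V → Prop) [DecidableRel E],
        Disjoint A B → A ∪ B = Finset.univ →
        (∀ u v, E u v → (u ∈ A ∧ v ∈ B) ∨ (u ∈ B ∧ v ∈ A)) →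
        (∀ u v, E u v → ¬ E v u) →
        3 ∣ A.card → 3 ∣ B.card → 3 ≤ A.card → 3 ≤ B.card →
        (∀ u ∈ A, B.card ≤ 3 * OutDeg E u) →
        (∀ v ∈ B, A.card ≤ 3 * OutDeg E v) →
        HasDirC4 E ∨ IsDStar A B E) :
    ∀ (V : Type) [Fintype V] [DecidableEq V] (A B : Finset V)
      (E : V → V → Prop) [DecidableRel E],
      Disjoint A B → A ∪ B = Finset.univ →
      (∀ u v, E u v → (u ∈ A ∧ v ∈ B) ∨ (u ∈ B ∧ v ∈ A)) →
      (∀ u v, E u v → ¬ E v u) →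
      2 ≤ A.card → 2 ≤ B.card → ¬ (3 ∣ A.card ∧ 3 ∣ B.card) →
      (∀ u ∈ A, B.card ≤ 3 * OutDeg E u) →
      (∀ v ∈ B, A.card ≤ 3 * OutDeg E v) →
      HasDirC4 E := by
  intro V _ _ A B E _ hdisj hcover hbip hasymm hA hB hnot3 hdegA hdegB
  -- `s` and `t` new vertices bring the part sizes up to the next multiples of 3
  obtain ⟨s, hs⟩ : ∃ s, s = (3 - A.card % 3) % 3 := ⟨_, rfl⟩
  obtain ⟨t, ht⟩ : ∃ t, t = (3 - B.card % 3) % 3 := ⟨_, rfl⟩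
  have hA' : (A.disjSum (univ.map .inl : Finset (Fin s ⊕ Fin t))).card = A.card + s := by simp
  have hB' : (B.disjSum (univ.map .inr : Finset (Fin s ⊕ Fin t))).card = B.card + t := by simp
  obtain hC4 | hDStar := H _ _ _ (addSources A B E) (disjoint_disjSum_map_inl_map_inr hdisj)
    (disjSum_union_disjSum_eq_univ hcover) (addSources_bipartite hbip) (addSources_asymm hasymm)
    (by omega) (by omega) (by omega) (by omega)
    (le_mul_outDeg_addSources_of_mem_left (fun u hu => by have := hdegA u hu; omega) (by omega))
    (le_mul_outDeg_addSources_of_mem_right (fun v hv => by have := hdegB v hv; omega) (by omega))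
  · exact hC4.of_addSources
  · obtain ⟨x⟩ : Nonempty (Fin s ⊕ Fin t) :=
      Fintype.card_pos_iff.1 (by simp only [Fintype.card_sum, Fintype.card_fin]; omega)
    obtain ⟨y, hy⟩ := hDStar.exists_arc_into (x := .inr x) (by omega) (by omega)
      (by rcases x with _ | _ <;> simp)
    exact (not_addSources_inr y x hy).elim
end

section
/- In an edge-colored graph G^c with no rainbow C4, with fixed edge xy, color neighborhoods A1 ⊆ N(y)\{x} and B1 ⊆ N(x)\{y} (edges to them rainbow from y resp. x), define the oriented bipartite graph D on A1 ∪ B1: for x_i ∈ A1, y_j ∈ B1 with x_i y_j ∈ E(G), C(x_i y_j) ≠ C(xy), and C(x y_j) ≠ C(y x_i), put arc x_i → y_j if C(x_i y_j) = C(x y_j), and arc y_j → x_i if C(x_i y_j) = C(y x_i). Then D contains no directed cycle of length 4. -/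
open Finset

/-- The edge-colored graph `(G, c)` contains a rainbow cycle of length 4:
four distinct vertices forming a 4-cycle whose edges have pairwise distinct colors. -/
def HasRainbowC4 {V : Type*} {α : Type*} (G : SimpleGraph V) (c : V → V → α) : Prop :=
  ∃ a b d e : V, a ≠ b ∧ a ≠ d ∧ a ≠ e ∧ b ≠ d ∧ b ≠ e ∧ d ≠ e ∧
    G.Adj a b ∧ G.Adj b d ∧ G.Adj d e ∧ G.Adj e a ∧
    c a b ≠ c b d ∧ c a b ≠ c d e ∧ c a b ≠ c e a ∧
    c b d ≠ c d e ∧ c b d ≠ c e a ∧ c d e ≠ c e a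

/-- The color degree of `v`: the number of distinct colors on edges incident with `v`. -/
def ColorDeg {V : Type*} [Fintype V] [DecidableEq V] (G : SimpleGraph V)
    [DecidableRel G.Adj] (c : V → V → ℕ) (v : V) : ℕ :=
  ((G.neighborFinset v).image fun w => c v w).card

/-!
An arc of `D` from `A` to `B` has the colour `c x` of its head, and an arc from `B` to `A` the
colour `c y` of its head. Around a directed 4-cycle `a → b → d → e → a` with `a, d ∈ A` the edge
colours are therefore `c x b, c y d, c x e, c y a`: the two `x`-colours differ because `x` sees `B`
rainbow, the two `y`-colours because `y` sees `A` rainbow, and consecutive mixed colours differ by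
the arc condition. So the cycle is a rainbow `C₄` of `G`.
-/

/-- The arcs of the oriented bipartite graph `D` on `A ∪ B`. -/
def ColorArc {V α : Type*} (G : SimpleGraph V) (c : V → V → α) (x y : V) (A B : Set V)
    (a b : V) : Prop :=
  (a ∈ A ∧ b ∈ B ∧ G.Adj a b ∧ c a b ≠ c x y ∧ c x b ≠ c y a ∧ c a b = c x b) ∨
  (a ∈ B ∧ b ∈ A ∧ G.Adj a b ∧ c a b ≠ c x y ∧ c x a ≠ c y b ∧ c a b = c y b)

namespace ColorArc

variable {V α : Type*} {G : SimpleGraph V} {c : V → V → α} {x y : V} {A B : Set V} {a b : V}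

theorem mem_or_mem (h : ColorArc G c x y A B a b) : a ∈ A ∨ a ∈ B := by
  rcases h with h | h
  exacts [.inl h.1, .inr h.1]

theorem of_mem_left (h : ColorArc G c x y A B a b) (hAB : Disjoint A B) (ha : a ∈ A) :
    b ∈ B ∧ G.Adj a b ∧ c x b ≠ c y a ∧ c a b = c x b := by
  rcases h with ⟨-, hb, hadj, -, hne, hc⟩ | ⟨ha', -⟩
  · exact ⟨hb, hadj, hne, hc⟩
  · exact absurd ha' (hAB.notMem_of_mem_left ha)

theorem of_mem_right (h : ColorArc G c x y A B a b) (hAB : Disjoint A B) (ha : a ∈ B) :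
    b ∈ A ∧ G.Adj a b ∧ c x a ≠ c y b ∧ c a b = c y b := by
  rcases h with ⟨ha', -⟩ | ⟨-, hb, hadj, -, hne, hc⟩
  · exact absurd ha (hAB.notMem_of_mem_left ha')
  · exact ⟨hb, hadj, hne, hc⟩

end ColorArc

theorem hasRainbowC4_of_colorArc_cycle {V α : Type*} {G : SimpleGraph V} {c : V → V → α}
    {x y : V} {A B : Set V} (hAB : Disjoint A B) (hA : Set.InjOn (c y) A)
    (hB : Set.InjOn (c x) B) {a b d e : V} (hab : a ≠ b) (had : a ≠ d) (hae : a ≠ e)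
    (hbd : b ≠ d) (hbe : b ≠ e) (hde : d ≠ e) (ha : a ∈ A)
    (h₁ : ColorArc G c x y A B a b) (h₂ : ColorArc G c x y A B b d)
    (h₃ : ColorArc G c x y A B d e) (h₄ : ColorArc G c x y A B e a) :
    HasRainbowC4 G c := by
  obtain ⟨hb, adj₁, hne₁, hc₁⟩ := h₁.of_mem_left hAB ha
  obtain ⟨hd, adj₂, hne₂, hc₂⟩ := h₂.of_mem_right hAB hb
  obtain ⟨he, adj₃, hne₃, hc₃⟩ := h₃.of_mem_left hAB hd
  obtain ⟨-, adj₄, hne₄, hc₄⟩ := h₄.of_mem_right hAB he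
  refine ⟨a, b, d, e, hab, had, hae, hbd, hbe, hde, adj₁, adj₂, adj₃, adj₄, ?_⟩
  rw [hc₁, hc₂, hc₃, hc₄]
  exact ⟨hne₂, hB.ne hb he hbe, hne₁, hne₃.symm, hA.ne hd ha had.symm, hne₄⟩

theorem not_hasDirC4_colorArc {V α : Type*} {G : SimpleGraph V} {c : V → V → α} {x y : V}
    {A B : Set V} (hnr : ¬ HasRainbowC4 G c) (hAB : Disjoint A B) (hA : Set.InjOn (c y) A)
    (hB : Set.InjOn (c x) B) : ¬ HasDirC4 (ColorArc G c x y A B) := by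
  rintro ⟨a, b, d, e, hab, had, hae, hbd, hbe, hde, h₁, h₂, h₃, h₄⟩
  apply hnr
  rcases h₁.mem_or_mem with ha | ha
  · exact hasRainbowC4_of_colorArc_cycle hAB hA hB hab had hae hbd hbe hde ha h₁ h₂ h₃ h₄
  · obtain ⟨hb, -⟩ := h₁.of_mem_right hAB ha
    exact hasRainbowC4_of_colorArc_cycle hAB hA hB hbd hbe hab.symm hde had.symm hae.symm hb
      h₂ h₃ h₄ h₁

theorem constructed_digraph_has_no_directed_C4_general {V : Type*}
    (G : SimpleGraph V) (c : V → V → ℕ)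
    (hnr : ¬ HasRainbowC4 G c)
    (x y : V)
    (A1 B1 : Finset V) (hdisj : Disjoint A1 B1)
    (hA1rainbow : ∀ a ∈ A1, ∀ b ∈ A1, a ≠ b → c y a ≠ c y b)
    (hB1rainbow : ∀ a ∈ B1, ∀ b ∈ B1, a ≠ b → c x a ≠ c x b)
    (E : V → V → Prop)
    (hE : ∀ a b, E a b ↔
      (a ∈ A1 ∧ b ∈ B1 ∧ G.Adj a b ∧ c a b ≠ c x y ∧ c x b ≠ c y a ∧ c a b = c x b) ∨
      (a ∈ B1 ∧ b ∈ A1 ∧ G.Adj a b ∧ c a b ≠ c x y ∧ c x a ≠ c y b ∧ c a b = c y b)) :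
    ¬ HasDirC4 E := by
  obtain rfl : E = ColorArc G c x y A1 B1 := funext₂ fun a b => propext (hE a b)
  refine not_hasDirC4_colorArc hnr (Finset.disjoint_coe.mpr hdisj) ?_ ?_
  · exact fun a ha b hb h => by_contra (hA1rainbow a ha b hb · h)
  · exact fun a ha b hb h => by_contra (hB1rainbow a ha b hb · h)

theorem constructed_digraph_has_no_directed_C4 {V : Type*} [Fintype V] [DecidableEq V]
    (G : SimpleGraph V) (c : V → V → ℕ) (hsym : ∀ u v, c u v = c v u)
    (hnr : ¬ HasRainbowC4 G c)
    (x y : V) (hxy : G.Adj x y)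
    (A1 B1 : Finset V) (hdisj : Disjoint A1 B1)
    (hA1 : ∀ a ∈ A1, G.Adj y a) (hxA1 : x ∉ A1)
    (hA1rainbow : ∀ a ∈ A1, ∀ b ∈ A1, a ≠ b → c y a ≠ c y b)
    (hB1 : ∀ b ∈ B1, G.Adj x b) (hyB1 : y ∉ B1)
    (hB1rainbow : ∀ a ∈ B1, ∀ b ∈ B1, a ≠ b → c x a ≠ c x b)
    (E : V → V → Prop)
    (hE : ∀ a b, E a b ↔
      (a ∈ A1 ∧ b ∈ B1 ∧ G.Adj a b ∧ c a b ≠ c x y ∧ c x b ≠ c y a ∧ c a b = c x b) ∨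
      (a ∈ B1 ∧ b ∈ A1 ∧ G.Adj a b ∧ c a b ≠ c x y ∧ c x a ≠ c y b ∧ c a b = c y b)) :
    ¬ HasDirC4 E :=
  constructed_digraph_has_no_directed_C4_general G c hnr x y A1 B1 hdisj hA1rainbow hB1rainbow E hE
end
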